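/- arXiv:2504.20586 — 2 statements merged into one kernel-verified Lean document; each statement's English description precedes it below -/
import Mathlib

section
/- For every real p with 0 < p < 1, the vector t = (1 + p/(1−p) + (1−p)/p, 1/(1−p), 1/p) is the unique solution of the linear system (I − Q)·t = (1, 1, 1), where Q = [[0, p, 1−p], [0, p, 0], [0, 0, 1−p]]. -/
/-!
`I - Q` is upper triangular with diagonal `1, 1 - p, p`, so its determinant `p (1 - p)` is
nonzero for `0 < p < 1`; hence `t ↦ (I - Q) t` is injective and the vector displayed, which
satisfies the system by direct computation, is its only solution.
-/

namespace AntitheticPairSampling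

variable {K : Type*}

/-- Transitions among the transient states `S, M⁺, M⁻`, in that order. -/
def transientMatrix [Ring K] (p : K) : Matrix (Fin 3) (Fin 3) K :=
  !![0, p, 1 - p; 0, p, 0; 0, 0, 1 - p]

def expectedSteps [DivisionRing K] (p : K) : Fin 3 → K :=
  ![1 + p / (1 - p) + (1 - p) / p, 1 / (1 - p), 1 / p]

theorem one_sub_transientMatrix [Ring K] (p : K) :
    1 - transientMatrix p = !![1, -p, p - 1; 0, 1 - p, 0; 0, 0, p] := by
  rw [transientMatrix, Matrix.one_fin_three]
  ext i j
  fin_cases i <;> fin_cases j <;> simp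

theorem det_one_sub_transientMatrix [CommRing K] (p : K) :
    (1 - transientMatrix p).det = p * (1 - p) := by
  rw [one_sub_transientMatrix, Matrix.det_fin_three]
  simp [mul_comm]

theorem mulVec_injective_one_sub_transientMatrix [Field K] {p : K} (hp : p ≠ 0)
    (hp' : 1 - p ≠ 0) : Function.Injective (1 - transientMatrix p).mulVec :=
  Matrix.mulVec_injective_of_det_ne_zero <| by
    rw [det_one_sub_transientMatrix]
    exact mul_ne_zero hp hp'

theorem one_sub_transientMatrix_mulVec_expectedSteps [Field K] {p : K} (hp : p ≠ 0)
    (hp' : 1 - p ≠ 0) : (1 - transientMatrix p).mulVec (expectedSteps p) = ![1, 1, 1] := by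
  rw [one_sub_transientMatrix, expectedSteps]
  simp only [Matrix.cons_mulVec, Matrix.vec3_dotProduct', Matrix.empty_mulVec,
    Matrix.vecCons_inj, and_true]
  refine ⟨?_, ?_, ?_⟩ <;> field_simp <;> ring

end AntitheticPairSampling

open AntitheticPairSampling in
theorem expected_absorption_time_unique_solution (p : ℝ) (hp0 : 0 < p) (hp1 : p < 1) :
    ((1 : Matrix (Fin 3) (Fin 3) ℝ) - !![0, p, 1 - p; 0, p, 0; 0, 0, 1 - p]).mulVec
        ![1 + p / (1 - p) + (1 - p) / p, 1 / (1 - p), 1 / p] = ![1, 1, 1] ∧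
    ∀ t : Fin 3 → ℝ,
      ((1 : Matrix (Fin 3) (Fin 3) ℝ) - !![0, p, 1 - p; 0, p, 0; 0, 0, 1 - p]).mulVec t
        = ![1, 1, 1] →
      t = ![1 + p / (1 - p) + (1 - p) / p, 1 / (1 - p), 1 / p] := by
  have hp : p ≠ 0 := hp0.ne'
  have hp' : 1 - p ≠ 0 := sub_ne_zero.mpr hp1.ne'
  have hsol := one_sub_transientMatrix_mulVec_expectedSteps hp hp'
  exact ⟨hsol, fun t ht ↦ mulVec_injective_one_sub_transientMatrix hp hp' (ht.trans hsol.symm)⟩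
end

section
/- Let (Ω, 𝓕, P) be a probability space, n a positive natural number, and W₁, …, Wₙ square-integrable real random variables with Cov(Wᵢ, Wⱼ) = 0 whenever i ≠ j, where Cov(X, Y) = E[XY] − E[X]E[Y] and Var(X) = Cov(X, X). For a subset T ⊆ {1, …, n}, define W̃ᵢ = Wᵢ for i ∈ T and W̃ᵢ = −Wᵢ for i ∉ T, and let Cov_T = Cov((1/n)·Σᵢ Wᵢ, (1/n)·Σⱼ W̃ⱼ). Then Cov_T = Cov_∅ + (2/n²)·Σ_{i ∈ T} Var(Wᵢ); in particular Cov_T ≥ Cov_∅, with strict inequality whenever Var(Wᵢ) > 0 for some i ∈ T. -/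
open MeasureTheory

/-- Covariance of the two group sample means when, for indices in `T`, the
second weight equals `W i` (same sign) and for indices outside `T` it equals
`-W i` (opposite sign), with `Cov(X, Y) = E[XY] - E[X]E[Y]`. -/
noncomputable def covFlip {Ω : Type*} [MeasurableSpace Ω] (P : Measure Ω)
    (n : ℕ) (W : Fin n → Ω → ℝ) (T : Finset (Fin n)) : ℝ :=
  (∫ ω, ((1 / (n : ℝ)) * ∑ i, W i ω) *
      ((1 / (n : ℝ)) * ∑ j, (if j ∈ T then W j ω else -W j ω)) ∂P)
    - (∫ ω, (1 / (n : ℝ)) * ∑ i, W i ω ∂P) *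
      (∫ ω, (1 / (n : ℝ)) * ∑ j, (if j ∈ T then W j ω else -W j ω) ∂P)

/-!
Both group means are linear combinations of the uncorrelated `Wᵢ`, with weights `1/n` and
`±1/n`, so by bilinearity their covariance is `(1/n²) Σᵢ εᵢ Var(Wᵢ)`, where `εᵢ = 1` on `T` and
`-1` off `T`. Moving an index into `T` turns `-Var(Wᵢ)` into `+Var(Wᵢ)`, and variances are
nonnegative.
-/

open ProbabilityTheory

lemma Finset.sum_sign_mul {ι : Type*} [Fintype ι] [DecidableEq ι] (T : Finset ι) (f : ι → ℝ) :
    ∑ i, (if i ∈ T then 1 else -1) * f i = 2 * ∑ i ∈ T, f i - ∑ i, f i := by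
  have hsign : ∀ i, (if i ∈ T then 1 else -1) * f i = 2 * (if i ∈ T then f i else 0) - f i :=
    fun i ↦ by split_ifs <;> ring
  simp_rw [hsign, Finset.sum_sub_distrib, ← Finset.mul_sum, Finset.sum_ite_mem,
    Finset.univ_inter]

section Covariance

variable {Ω : Type*} [MeasurableSpace Ω] {μ : Measure Ω}

lemma covariance_sum_mul_sum_mul_of_pairwise [IsFiniteMeasure μ] {ι : Type*} [Fintype ι]
    {X : ι → Ω → ℝ} (hX : ∀ i, MemLp (X i) 2 μ) (hXX : Pairwise fun i j ↦ cov[X i, X j; μ] = 0)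
    (a b : ι → ℝ) :
    cov[fun ω ↦ ∑ i, a i * X i ω, fun ω ↦ ∑ j, b j * X j ω; μ]
      = ∑ i, a i * b i * Var[X i; μ] := by
  rw [covariance_fun_sum_fun_sum (X := fun i ω ↦ a i * X i ω) (Y := fun j ω ↦ b j * X j ω)
    (fun i ↦ (hX i).const_mul _) (fun j ↦ (hX j).const_mul _)]
  refine Fintype.sum_congr _ _ fun i ↦ ?_
  rw [Fintype.sum_eq_single i fun j hji ↦ by
    rw [covariance_const_mul_left, covariance_const_mul_right, hXX hji.symm, mul_zero, mul_zero]]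
  rw [covariance_const_mul_left, covariance_const_mul_right, covariance_self (hX i).aemeasurable]
  ring

variable [IsProbabilityMeasure μ] {n : ℕ} {W : Fin n → Ω → ℝ}

lemma covFlip_eq_covariance (hW : ∀ i, MemLp (W i) 2 μ) (T : Finset (Fin n)) :
    covFlip μ n W T = cov[fun ω ↦ (1 / (n : ℝ)) * ∑ i, W i ω,
      fun ω ↦ (1 / (n : ℝ)) * ∑ j, (if j ∈ T then W j ω else -W j ω); μ] := by
  have hflip (j : Fin n) : MemLp (fun ω ↦ if j ∈ T then W j ω else -W j ω) 2 μ := by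
    split_ifs
    exacts [hW j, (hW j).neg]
  rw [covariance_eq_sub ((memLp_finsetSum _ fun i _ ↦ hW i).const_mul _)
    ((memLp_finsetSum _ fun j _ ↦ hflip j).const_mul _)]
  rfl

lemma covFlip_eq (hW : ∀ i, MemLp (W i) 2 μ) (hWW : Pairwise fun i j ↦ cov[W i, W j; μ] = 0)
    (T : Finset (Fin n)) :
    covFlip μ n W T = (2 * ∑ i ∈ T, Var[W i; μ] - ∑ i, Var[W i; μ]) / n ^ 2 := by
  have hmean : (fun ω ↦ (1 / (n : ℝ)) * ∑ i, W i ω) = fun ω ↦ ∑ i, (1 / (n : ℝ)) * W i ω :=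
    funext fun ω ↦ Finset.mul_sum _ _ _
  have hflip : (fun ω ↦ (1 / (n : ℝ)) * ∑ j, (if j ∈ T then W j ω else -W j ω))
      = fun ω ↦ ∑ j, (1 / (n : ℝ) * if j ∈ T then 1 else -1) * W j ω := by
    funext ω
    rw [Finset.mul_sum]
    refine Fintype.sum_congr _ _ fun j ↦ ?_
    split_ifs <;> ring
  rw [covFlip_eq_covariance hW, hmean, hflip, covariance_sum_mul_sum_mul_of_pairwise hW hWW,
    ← Finset.sum_sign_mul, Finset.sum_div]
  exact Fintype.sum_congr _ _ fun i ↦ by ring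

end Covariance

theorem gas_cov_is_minimal_general
    {Ω : Type*} [MeasurableSpace Ω] (P : Measure Ω) [IsProbabilityMeasure P]
    (n : ℕ) (W : Fin n → Ω → ℝ)
    (hW : ∀ i, MemLp (W i) 2 P)
    (hcov : ∀ i j, i ≠ j →
      (∫ ω, W i ω * W j ω ∂P) - (∫ ω, W i ω ∂P) * (∫ ω, W j ω ∂P) = 0)
    (T : Finset (Fin n)) :
    covFlip P n W T = covFlip P n W ∅
        + (2 / (n : ℝ) ^ 2) *
            ∑ i ∈ T, ((∫ ω, W i ω * W i ω ∂P) - (∫ ω, W i ω ∂P) * (∫ ω, W i ω ∂P)) ∧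
    covFlip P n W ∅ ≤ covFlip P n W T ∧
    ((∃ i ∈ T, 0 < (∫ ω, W i ω * W i ω ∂P) - (∫ ω, W i ω ∂P) * (∫ ω, W i ω ∂P)) →
      covFlip P n W ∅ < covFlip P n W T) := by
  have hvar (i : Fin n) :
      (∫ ω, W i ω * W i ω ∂P) - (∫ ω, W i ω ∂P) * (∫ ω, W i ω ∂P) = Var[W i; P] := by
    rw [← covariance_self (hW i).aemeasurable, covariance_eq_sub (hW i) (hW i)]
    rfl
  have hWW : Pairwise fun i j ↦ cov[W i, W j; P] = 0 := fun i j hij ↦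
    (covariance_eq_sub (hW i) (hW j)).trans (hcov i j hij)
  have key : covFlip P n W T = covFlip P n W ∅ + 2 / (n : ℝ) ^ 2 * ∑ i ∈ T, Var[W i; P] := by
    rw [covFlip_eq hW hWW T, covFlip_eq hW hWW ∅, Finset.sum_empty]
    ring
  simp only [hvar]
  refine ⟨key, ?_, ?_⟩
  · rw [key]
    exact le_add_of_nonneg_right <|
      mul_nonneg (by positivity) (Finset.sum_nonneg fun i _ ↦ variance_nonneg _ _)
  · rintro ⟨i, hiT, hi⟩
    have hn : (0 : ℝ) < n := by exact_mod_cast i.pos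
    rw [key]
    exact lt_add_of_pos_right _ <|
      mul_pos (by positivity) (Finset.sum_pos' (fun j _ ↦ variance_nonneg _ _) ⟨i, hiT, hi⟩)

theorem gas_cov_is_minimal
    {Ω : Type*} [MeasurableSpace Ω] (P : Measure Ω) [IsProbabilityMeasure P]
    (n : ℕ) (hn : 0 < n) (W : Fin n → Ω → ℝ)
    (hW : ∀ i, MemLp (W i) 2 P)
    (hcov : ∀ i j, i ≠ j →
      (∫ ω, W i ω * W j ω ∂P) - (∫ ω, W i ω ∂P) * (∫ ω, W j ω ∂P) = 0)
    (T : Finset (Fin n)) :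
    covFlip P n W T = covFlip P n W ∅
        + (2 / (n : ℝ) ^ 2) *
            ∑ i ∈ T, ((∫ ω, W i ω * W i ω ∂P) - (∫ ω, W i ω ∂P) * (∫ ω, W i ω ∂P)) ∧
    covFlip P n W ∅ ≤ covFlip P n W T ∧
    ((∃ i ∈ T, 0 < (∫ ω, W i ω * W i ω ∂P) - (∫ ω, W i ω ∂P) * (∫ ω, W i ω ∂P)) →
      covFlip P n W ∅ < covFlip P n W T) :=
  gas_cov_is_minimal_general P n W hW hcov T
end
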